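/- arXiv:1003.4203 — 3 statements merged into one kernel-verified Lean document; each statement's English description precedes it below -/
import Mathlib

section
/- (Positivity of the effective diffusion coefficient.) Assume V ∈ C^∞(𝕋^d). Fix a unit vector e ∈ ℝ^d and suppose φ ∈ C^∞(X), with φ and all its partial derivatives in L²(μ_β), solves the Poisson equation 𝓛 φ = p·e pointwise on X. Then D^e := β^{-1} Σ_{j=1}^m α_j ∫_X |∇_{z_j} φ|² dμ_β > 0; in particular it is impossible that ∇_{z_j} φ = 0 μ_β-almost everywhere for every j = 1,…,m. -/
open MeasureTheory Real Filter

noncomputable section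

/-- The state space `X = 𝕋^d × ℝ^d × ℝ^{dm}`, realised as
`ℝ^d × ℝ^d × (ℝ^d)^m` with functions that are `ℤ^d`-periodic in the first variable. -/
abbrev Xsp (d m : ℕ) := (Fin d → ℝ) × (Fin d → ℝ) × (Fin m → Fin d → ℝ)

/-- The direction in the `z_j`-block given by the vector `v`. -/
def zdir (d m : ℕ) (j : Fin m) (v : Fin d → ℝ) : Xsp d m :=
  (0, 0, Function.update 0 j v)

/-- The partial derivative `∂_{z_{j,k}} φ`. -/
def pZ (d m : ℕ) (j : Fin m) (k : Fin d) (φ : Xsp d m → ℝ) (x : Xsp d m) : ℝ :=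
  fderiv ℝ φ x (zdir d m j (Pi.single k 1))

/-- The partial derivative `∂_{p_k} φ`. -/
def pP (d m : ℕ) (k : Fin d) (φ : Xsp d m → ℝ) (x : Xsp d m) : ℝ :=
  fderiv ℝ φ x (0, Pi.single k 1, 0)

/-- The partial derivative `∂_{q_k} φ`. -/
def pQ (d m : ℕ) (k : Fin d) (φ : Xsp d m → ℝ) (x : Xsp d m) : ℝ :=
  fderiv ℝ φ x (Pi.single k 1, 0, 0)

/-- The operator `𝓛` (negative of the generator of the Markovian GLE dynamics):
`𝓛φ = −p·∇_qφ + ∇V·∇_pφ − Σ_j λ_j z_j·∇_pφ + Σ_j λ_j p·∇_{z_j}φ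
      + Σ_j α_j z_j·∇_{z_j}φ − β⁻¹ Σ_j α_j Δ_{z_j}φ`. -/
def gen (d m : ℕ) (β : ℝ) (α lam : Fin m → ℝ) (V : (Fin d → ℝ) → ℝ)
    (φ : Xsp d m → ℝ) (x : Xsp d m) : ℝ :=
  - fderiv ℝ φ x (x.2.1, 0, 0)
  + fderiv ℝ φ x (0, (fun i => fderiv ℝ V x.1 (Pi.single i 1)), 0)
  - fderiv ℝ φ x (0, ∑ j, lam j • x.2.2 j, 0)
  + ∑ j, lam j * fderiv ℝ φ x (zdir d m j x.2.1)
  + ∑ j, α j * fderiv ℝ φ x (zdir d m j (x.2.2 j))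
  - β⁻¹ * ∑ j, α j * ∑ k, fderiv ℝ (pZ d m j k φ) x (zdir d m j (Pi.single k 1))

/-- The (unnormalised) Gibbs density `exp(−β(V(q) + |p|²/2 + |z|²/2))`. -/
def gdens (d m : ℕ) (β : ℝ) (V : (Fin d → ℝ) → ℝ) (x : Xsp d m) : ℝ :=
  Real.exp (-β * (V x.1 + (∑ i, (x.2.1 i) ^ 2) / 2 + (∑ j, ∑ i, (x.2.2 j i) ^ 2) / 2))

/-- The fundamental domain `[0,1)^d` for the torus in the `q`-variable. -/
def cube (d : ℕ) : Set (Fin d → ℝ) := {q | ∀ i, q i ∈ Set.Ico (0 : ℝ) 1}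

/-- Lebesgue measure on `X = 𝕋^d × ℝ^d × ℝ^{dm}` (the `q`-variable being
restricted to a fundamental domain of the torus). -/
def volX (d m : ℕ) : Measure (Xsp d m) :=
  (volume : Measure (Xsp d m)).restrict {x | x.1 ∈ cube d}

/-- The Gibbs measure `μ_β`, with density `Z⁻¹ exp(−β(V(q)+|p|²/2+|z|²/2))`. -/
def gibbs (d m : ℕ) (β Z : ℝ) (V : (Fin d → ℝ) → ℝ) : Measure (Xsp d m) :=
  (volX d m).withDensity fun x => ENNReal.ofReal (Z⁻¹ * gdens d m β V x)

/-- `ℤ^d`-periodicity in the `q`-variable. -/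
def PerQ (d m : ℕ) (φ : Xsp d m → ℝ) : Prop :=
  ∀ (k : Fin d → ℤ) (x : Xsp d m), φ (x.1 + (fun i => (k i : ℝ)), x.2) = φ x

/-- `ℤ^d`-periodicity of the potential. -/
def PerV (d : ℕ) (V : (Fin d → ℝ) → ℝ) : Prop :=
  ∀ (k : Fin d → ℤ) (q : Fin d → ℝ), V (q + fun i => (k i : ℝ)) = V q

/-- A test function: smooth, periodic in `q`, compactly supported in `(p,z)`. -/
def IsTest (d m : ℕ) (φ : Xsp d m → ℝ) : Prop :=
  ContDiff ℝ (⊤ : ℕ∞) φ ∧ PerQ d m φ ∧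
    ∃ K : Set ((Fin d → ℝ) × (Fin m → Fin d → ℝ)),
      IsCompact K ∧ ∀ x : Xsp d m, x.2 ∉ K → φ x = 0

section Aux

variable {d m : ℕ}

/-- Decomposition of a continuous linear functional in the `z`-directions. -/
lemma clm_z_decomp (L : Xsp d m →L[ℝ] ℝ) (w : Fin m → Fin d → ℝ) :
    L (0, 0, w) = ∑ j, ∑ k, w j k * L (zdir d m j (Pi.single k 1)) := by
  have hw : ((0, 0, w) : Xsp d m) = ∑ j, ∑ k, w j k • zdir d m j (Pi.single k 1) := by
    refine Prod.ext ?_ (Prod.ext ?_ ?_)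
    · simp [zdir, Prod.fst_sum]
    · simp [zdir, Prod.fst_sum, Prod.snd_sum]
    · funext j' k'
      simp only [zdir, Prod.snd_sum, Prod.smul_mk, Finset.sum_apply, Pi.smul_apply,
        smul_eq_mul, Function.update_apply, ite_apply, Pi.zero_apply, Pi.single_apply, mul_ite, mul_one, mul_zero]
      simp [Finset.sum_ite_eq, Finset.sum_ite_eq']
  rw [hw, map_sum]
  refine Finset.sum_congr rfl fun j _ => ?_
  rw [map_sum]
  refine Finset.sum_congr rfl fun k _ => ?_
  rw [ContinuousLinearMap.map_smul, smul_eq_mul]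

/-- Translation invariance of the derivative of a translation-invariant function. -/
lemma fderiv_translate {E F : Type*} [NormedAddCommGroup E] [NormedSpace ℝ E]
    [NormedAddCommGroup F] [NormedSpace ℝ F]
    {ψ : E → F} (hψ : Differentiable ℝ ψ) (c : E) (hper : ∀ x, ψ (x + c) = ψ x)
    (x : E) : fderiv ℝ ψ (x + c) = fderiv ℝ ψ x := by
  have h1 : ψ ∘ (fun y => y + c) = ψ := funext hper
  have h2 : fderiv ℝ (ψ ∘ fun y => y + c) x
      = (fderiv ℝ ψ (x + c)).comp (fderiv ℝ (fun y : E => y + c) x) :=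
    fderiv_comp x (hψ _) (differentiable_id.add_const c _)
  have h3 : fderiv ℝ (fun y : E => y + c) x = ContinuousLinearMap.id ℝ E := by
    rw [fderiv_add_const]; exact fderiv_id' 
  rw [h1, h3, ContinuousLinearMap.comp_id] at h2
  exact h2.symm

end Aux
section MeasureAux

/-- continuity of the `z`-partials of a smooth function -/
lemma pZ_continuous (d m : ℕ) (φ : Xsp d m → ℝ) (hφ : ContDiff ℝ (⊤ : ℕ∞) φ)
    (j : Fin m) (k : Fin d) : Continuous (pZ d m j k φ) :=
  (hφ.continuous_fderiv (by simp)).clm_apply continuous_const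

/-- From `μ_β`-a.e. vanishing to everywhere vanishing, for the `z`-partials. -/
lemma ae_to_everywhere (d m : ℕ) (β Z : ℝ) (hZ : 0 < Z)
    (V : (Fin d → ℝ) → ℝ) (hV : ContDiff ℝ (⊤ : ℕ∞) V)
    (φ : Xsp d m → ℝ) (hφ : ContDiff ℝ (⊤ : ℕ∞) φ) (hφper : PerQ d m φ)
    (hae : ∀ j : Fin m, ∀ᵐ x ∂(gibbs d m β Z V), ∀ k : Fin d, pZ d m j k φ x = 0) :
    ∀ (j : Fin m) (k : Fin d) (x : Xsp d m), pZ d m j k φ x = 0 := by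
  haveI hri1 : (volume : Measure ((Fin d → ℝ) × (Fin m → Fin d → ℝ))).IsAddRightInvariant :=
    Measure.prod.instIsAddRightInvariant
  haveI hri2 : (volume : Measure (Xsp d m)).IsAddRightInvariant :=
    Measure.prod.instIsAddRightInvariant
  haveI hop1 : (volume : Measure ((Fin d → ℝ) × (Fin m → Fin d → ℝ))).IsOpenPosMeasure :=
    Measure.prod.instIsOpenPosMeasure
  haveI hop2 : (volume : Measure (Xsp d m)).IsOpenPosMeasure :=
    Measure.prod.instIsOpenPosMeasure
  have hdpos : ∀ x : Xsp d m, 0 < Z⁻¹ * gdens d m β V x := by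
    intro x
    have : (0:ℝ) < gdens d m β V x := by rw [gdens]; exact Real.exp_pos _
    exact mul_pos (inv_pos.2 hZ) this
  have hcont : ∀ (j : Fin m) (k : Fin d), Continuous (pZ d m j k φ) :=
    pZ_continuous d m φ hφ
  set s : Set (Xsp d m) := {x | ∃ j k, pZ d m j k φ x ≠ 0} with hs
  have hsopen : IsOpen s := by
    have : s = ⋃ j, ⋃ k, (pZ d m j k φ) ⁻¹' ({0}ᶜ) := by
      ext x; simp [hs, Set.mem_iUnion]
    rw [this]
    exact isOpen_iUnion fun j => isOpen_iUnion fun k =>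
      (hcont j k).isOpen_preimage _ isOpen_compl_singleton
  -- gibbs-null
  have hgibbs : gibbs d m β Z V s = 0 := by
    have h1 : ∀ᵐ x ∂(gibbs d m β Z V), ∀ (j : Fin m) (k : Fin d), pZ d m j k φ x = 0 :=
      (ae_all_iff).2 hae
    have h2 : sᶜ ∈ ae (gibbs d m β Z V) := by
      filter_upwards [h1] with x hx
      simp only [hs, Set.mem_compl_iff, Set.mem_setOf_eq, not_exists]
      intro j k hk
      exact hk (hx j k)
    have h3 := mem_ae_iff.1 h2
    rwa [compl_compl] at h3
  -- density is everywhere nonzero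
  have hdens : ∀ x : Xsp d m, ENNReal.ofReal (Z⁻¹ * gdens d m β V x) ≠ 0 := by
    intro x
    have : 0 < Z⁻¹ * gdens d m β V x :=
      mul_pos (inv_pos.2 hZ) (Real.exp_pos _)
    simp [ENNReal.ofReal_pos.2 this, ne_of_gt]
  have hVc : Continuous V := hV.continuous
  have hgc : Continuous (gdens d m β V) := by
    unfold gdens
    fun_prop
  have hdensm : Measurable fun x : Xsp d m => ENNReal.ofReal (Z⁻¹ * gdens d m β V x) :=
    (continuous_const.mul hgc).measurable.ennreal_ofReal
  -- volX-null
  have hvolX : volX d m s = 0 := by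
    have h1 : (volX d m).withDensity (fun x => ENNReal.ofReal (Z⁻¹ * gdens d m β V x)) s = 0 :=
      hgibbs
    have h2 := (withDensity_apply_eq_zero hdensm).1 h1
    have huniv : {x : Xsp d m | ENNReal.ofReal (Z⁻¹ * gdens d m β V x) ≠ 0} ∩ s = s := by
      ext x; simp only [Set.mem_inter_iff, Set.mem_setOf_eq, and_iff_right_iff_imp]
      intro _; exact hdens x
    rwa [huniv] at h2
  have hslab : (volume : Measure (Xsp d m)) (s ∩ {x | x.1 ∈ cube d}) = 0 := by
    have h1 := hvolX
    rwa [volX, Measure.restrict_apply hsopen.measurableSet] at h1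
  -- translation invariance of s
  have hsinv : ∀ (c : Fin d → ℤ) (x : Xsp d m),
      (x + (((fun i => (c i : ℝ)), 0, 0) : Xsp d m) ∈ s ↔ x ∈ s) := by
    intro c x
    have hper : ∀ y : Xsp d m, φ (y + (((fun i => (c i : ℝ)), 0, 0) : Xsp d m)) = φ y := by
      intro y
      have h1 := hφper c y
      have hy : y + (((fun i => (c i : ℝ)), 0, 0) : Xsp d m)
          = (y.1 + (fun i => (c i : ℝ)), y.2) := by
        cases' y with a b; cases' b with b z; simp [Prod.mk_add_mk]
      rw [hy]; exact h1
    have hfd : fderiv ℝ φ (x + (((fun i => (c i : ℝ)), 0, 0) : Xsp d m)) = fderiv ℝ φ x :=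
      fderiv_translate (hφ.differentiable (by simp)) _ hper x
    simp only [hs, Set.mem_setOf_eq, pZ, hfd]
  -- covering by integer translates of the fundamental slab
  have hcover : s ⊆ ⋃ (c : Fin d → ℤ),
      (fun x : Xsp d m => x + (((fun i => (c i : ℝ)), 0, 0) : Xsp d m)) ⁻¹'
        (s ∩ {x | x.1 ∈ cube d}) := by
    intro x hx
    refine Set.mem_iUnion.2 ⟨fun i => -⌊x.1 i⌋, ?_, ?_⟩
    · exact (hsinv _ x).2 hx
    · intro i
      have hxi : (x + (((fun i => ((-⌊x.1 i⌋ : ℤ) : ℝ)), 0, 0) : Xsp d m)).1 i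
          = Int.fract (x.1 i) := by
        show x.1 i + ((-⌊x.1 i⌋ : ℤ) : ℝ) = Int.fract (x.1 i)
        rw [Int.fract]
        push_cast
        ring
      rw [hxi]
      exact ⟨Int.fract_nonneg _, Int.fract_lt_one _⟩
  have hvol : (volume : Measure (Xsp d m)) s = 0 := by
    refine measure_mono_null hcover ?_
    rw [measure_iUnion_null_iff]
    intro c
    rw [measure_preimage_add_right]
    exact hslab
  have hempty : s = ∅ := (hsopen.measure_eq_zero_iff volume).1 hvol
  intro j k x
  by_contra hne
  have hxs : x ∈ s := ⟨j, k, hne⟩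
  rw [hempty] at hxs
  exact hxs

end MeasureAux
section Analytic

variable {d m : ℕ}

/-- If all `z`-partials of a smooth solution of the Poisson equation vanish everywhere,
we reach a contradiction. -/
lemma analytic_contradiction (d m : ℕ) (hm : 1 ≤ m)
    (β : ℝ) (α lam : Fin m → ℝ) (hlam : ∀ j, 0 < lam j)
    (V : (Fin d → ℝ) → ℝ)
    (e : Fin d → ℝ) (he : ∑ i, (e i) ^ 2 = 1)
    (φ : Xsp d m → ℝ) (hφ : ContDiff ℝ (⊤ : ℕ∞) φ) (hφper : PerQ d m φ)
    (hz : ∀ j k x, pZ d m j k φ x = 0)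
    (hpoisson : ∀ x, gen d m β α lam V φ x = ∑ i, x.2.1 i * e i) : False := by
  have hdiff : Differentiable ℝ φ := hφ.differentiable (by simp)
  -- all z-directional derivatives vanish
  have hL3 : ∀ (x : Xsp d m) (w : Fin m → Fin d → ℝ), fderiv ℝ φ x (0, 0, w) = 0 := by
    intro x w
    rw [clm_z_decomp]
    exact Finset.sum_eq_zero fun j _ => Finset.sum_eq_zero fun k _ => by
      rw [show fderiv ℝ φ x (zdir d m j (Pi.single k 1)) = pZ d m j k φ x from rfl,
        hz, mul_zero]
  have hzdir : ∀ (x : Xsp d m) (j : Fin m) (v : Fin d → ℝ),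
      fderiv ℝ φ x (zdir d m j v) = 0 := fun x j v => hL3 x _
  -- φ is independent of z
  let jz : (Fin m → Fin d → ℝ) →L[ℝ] Xsp d m :=
    (0 : (Fin m → Fin d → ℝ) →L[ℝ] (Fin d → ℝ)).prod
      ((0 : (Fin m → Fin d → ℝ) →L[ℝ] (Fin d → ℝ)).prod (ContinuousLinearMap.id ℝ _))
  have hzconst : ∀ (q p : Fin d → ℝ) (z : Fin m → Fin d → ℝ), φ (q, p, z) = φ (q, p, 0) := by
    intro q p z
    set F : (Fin m → Fin d → ℝ) → ℝ := fun w => φ (((q, p, 0) : Xsp d m) + jz w) with hF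
    have hFd : ∀ w, HasFDerivAt F ((fderiv ℝ φ (((q,p,0) : Xsp d m) + jz w)).comp jz) w :=
      fun w => (hdiff _).hasFDerivAt.comp w (jz.hasFDerivAt.const_add _)
    have hF0 : ∀ w, fderiv ℝ F w = 0 := by
      intro w
      rw [(hFd w).fderiv]
      ext w'
      simp only [ContinuousLinearMap.comp_apply, ContinuousLinearMap.zero_apply]
      exact hL3 _ w'
    have hc := is_const_of_fderiv_eq_zero (fun w => (hFd w).differentiableAt) hF0 z 0
    have e1 : (((q,p,0) : Xsp d m) + jz z) = (q, p, z) := by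
      show ((q,p,0) : Xsp d m) + (0,0,z) = (q,p,z)
      simp [Prod.mk_add_mk]
    have e2 : (((q,p,0) : Xsp d m) + jz 0) = (q, p, 0) := by
      show ((q,p,0) : Xsp d m) + (0,0,0) = (q,p,0)
      simp [Prod.mk_add_mk]
    simpa only [hF, e1, e2] using hc
  -- derivative only depends on q and p through the base point with z = 0
  have hbase : ∀ (q p : Fin d → ℝ) (z : Fin m → Fin d → ℝ),
      fderiv ℝ φ (q, p, z) = fderiv ℝ φ (q, p, 0) := by
    intro q p z
    have hper : ∀ y : Xsp d m, φ (y + (0, 0, z)) = φ y := by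
      intro y
      have hy : y + ((0,0,z) : Xsp d m) = (y.1, y.2.1, y.2.2 + z) := by
        cases' y with a b; cases' b with b c
        simp [Prod.mk_add_mk]
      rw [hy, hzconst, ← hzconst y.1 y.2.1 y.2.2]
    have := fderiv_translate hdiff ((0,0,z) : Xsp d m) hper (q, p, 0)
    have e1 : (((q,p,0) : Xsp d m) + (0,0,z)) = (q, p, z) := by
      simp [Prod.mk_add_mk]
    rw [e1] at this
    exact this
  -- the pZ functions are identically zero, hence so is their derivative
  have hpZ0 : ∀ (j : Fin m) (k : Fin d), (pZ d m j k φ) = (fun _ => (0:ℝ)) :=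
    fun j k => funext (hz j k)
  -- simplified Poisson equation
  have heq : ∀ x : Xsp d m, - fderiv ℝ φ x (x.2.1, 0, 0)
      + fderiv ℝ φ x (0, (fun i => fderiv ℝ V x.1 (Pi.single i 1)), 0)
      - fderiv ℝ φ x (0, ∑ j, lam j • x.2.2 j, 0) = ∑ i, x.2.1 i * e i := by
    intro x
    have h := hpoisson x
    unfold gen at h
    simp only [hzdir, mul_zero, Finset.sum_const_zero, add_zero, hpZ0, fderiv_const, fderiv_const_apply,
      Pi.zero_apply, ContinuousLinearMap.zero_apply, mul_zero, sub_zero] at h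
    exact h
  -- p-directional derivatives vanish
  have hp0 : ∀ (x : Xsp d m) (w : Fin d → ℝ), fderiv ℝ φ x (0, w, 0) = 0 := by
    intro x w
    set j0 : Fin m := ⟨0, hm⟩ with hj0
    set q := x.1; set p := x.2.1
    have hA := heq (q, p, Function.update 0 j0 w)
    have hB := heq (q, p, (0 : Fin m → Fin d → ℝ))
    rw [hbase] at hA hB
    simp only at hA hB
    have hsum : (∑ j, lam j • Function.update (0 : Fin m → Fin d → ℝ) j0 w j) = lam j0 • w := by
      rw [Finset.sum_eq_single j0]
      · rw [Function.update_self]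
      · intro j _ hj; rw [Function.update_of_ne hj]; simp
      · simp
    have hsum0 : (∑ j, lam j • (0 : Fin m → Fin d → ℝ) j) = 0 := by simp
    rw [hsum] at hA
    rw [hsum0] at hB
    have hdiffAB : fderiv ℝ φ (q, p, 0) (0, lam j0 • w, 0) = 0 := by
      have h0 : fderiv ℝ φ (q, p, 0) ((0 : Fin d → ℝ), (0 : Fin d → ℝ), (0 : Fin m → Fin d → ℝ)) = 0 := by
        rw [show ((0,0,0) : Xsp d m) = (0 : Xsp d m) from rfl, map_zero]
      linarith [hA, hB, h0]
    have hsm : ((0, lam j0 • w, 0) : Xsp d m) = lam j0 • ((0, w, 0) : Xsp d m) := by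
      simp [Prod.smul_mk]
    rw [hsm, ContinuousLinearMap.map_smul, smul_eq_mul] at hdiffAB
    have hw0 : fderiv ℝ φ (q, p, 0) (0, w, 0) = 0 := by
      rcases mul_eq_zero.1 hdiffAB with h | h
      · exact absurd h (hlam j0).ne'
      · exact h
    calc fderiv ℝ φ x (0, w, 0) = fderiv ℝ φ (q, p, x.2.2) (0, w, 0) := rfl
    _ = fderiv ℝ φ (q, p, 0) (0, w, 0) := by rw [hbase]
    _ = 0 := hw0
  -- φ is independent of p as well
  let jp : (Fin d → ℝ) →L[ℝ] Xsp d m :=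
    (0 : (Fin d → ℝ) →L[ℝ] (Fin d → ℝ)).prod
      ((ContinuousLinearMap.id ℝ _).prod (0 : (Fin d → ℝ) →L[ℝ] (Fin m → Fin d → ℝ)))
  have hpconst : ∀ (q p : Fin d → ℝ) (z : Fin m → Fin d → ℝ), φ (q, p, z) = φ (q, 0, z) := by
    intro q p z
    set F : (Fin d → ℝ) → ℝ := fun w => φ (((q, 0, z) : Xsp d m) + jp w) with hF
    have hFd : ∀ w, HasFDerivAt F ((fderiv ℝ φ (((q,0,z) : Xsp d m) + jp w)).comp jp) w :=
      fun w => (hdiff _).hasFDerivAt.comp w (jp.hasFDerivAt.const_add _)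
    have hF0 : ∀ w, fderiv ℝ F w = 0 := by
      intro w
      rw [(hFd w).fderiv]
      ext w'
      simp only [ContinuousLinearMap.comp_apply, ContinuousLinearMap.zero_apply]
      exact hp0 _ w'
    have hc := is_const_of_fderiv_eq_zero (fun w => (hFd w).differentiableAt) hF0 p 0
    have e1 : (((q,0,z) : Xsp d m) + jp p) = (q, p, z) := by
      show ((q,0,z) : Xsp d m) + (0,p,0) = (q,p,z)
      simp [Prod.mk_add_mk]
    have e2 : (((q,0,z) : Xsp d m) + jp 0) = (q, 0, z) := by
      show ((q,0,z) : Xsp d m) + (0,0,0) = (q,0,z)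
      simp [Prod.mk_add_mk]
    simpa only [hF, e1, e2] using hc
  -- full independence in (p, z)
  have hindep : ∀ (q p p' : Fin d → ℝ) (z z' : Fin m → Fin d → ℝ),
      φ (q, p, z) = φ (q, p', z') := by
    intro q p p' z z'
    rw [hzconst, hpconst, ← hpconst q p' 0, ← hzconst]
  -- derivative depends only on q
  have hbase2 : ∀ (q p : Fin d → ℝ) (z : Fin m → Fin d → ℝ),
      fderiv ℝ φ (q, p, z) = fderiv ℝ φ (q, 0, 0) := by
    intro q p z
    have hper : ∀ y : Xsp d m, φ (y + (0, p, z)) = φ y := by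
      intro y
      have hy : y + ((0,p,z) : Xsp d m) = (y.1, y.2.1 + p, y.2.2 + z) := by
        cases' y with a b; cases' b with b c
        simp [Prod.mk_add_mk]
      rw [hy, hindep y.1 (y.2.1 + p) y.2.1 (y.2.2 + z) y.2.2]
    have := fderiv_translate hdiff ((0,p,z) : Xsp d m) hper (q, 0, 0)
    have e1 : (((q,0,0) : Xsp d m) + (0,p,z)) = (q, p, z) := by
      simp [Prod.mk_add_mk]
    rw [e1] at this
    exact this
  -- the final equation : M_q (v,0,0) = -∑ v i e i
  have hfin : ∀ (q v : Fin d → ℝ), fderiv ℝ φ (q, 0, 0) (v, 0, 0) = -∑ i, v i * e i := by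
    intro q v
    have h := heq (q, v, 0)
    simp only at h
    rw [hbase2] at h
    rw [hp0, hp0] at h
    linarith [h]
  -- build θ and h
  let ιq : (Fin d → ℝ) →L[ℝ] Xsp d m :=
    ContinuousLinearMap.inl ℝ (Fin d → ℝ) ((Fin d → ℝ) × (Fin m → Fin d → ℝ))
  set θ : (Fin d → ℝ) → ℝ := fun q => φ (q, 0, 0) with hθ
  have hθd : ∀ q, HasFDerivAt θ ((fderiv ℝ φ ((q : Fin d → ℝ), 0, 0)).comp ιq) q := by
    intro q
    have : HasFDerivAt φ (fderiv ℝ φ (ιq q)) (ιq q) := (hdiff _).hasFDerivAt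
    exact this.comp q ιq.hasFDerivAt
  let ℓ : (Fin d → ℝ) →L[ℝ] ℝ := ∑ i, e i • ContinuousLinearMap.proj i
  have hℓ : ∀ v, ℓ v = ∑ i, e i * v i := by
    intro v
    simp [ℓ, ContinuousLinearMap.sum_apply, ContinuousLinearMap.smul_apply,
      ContinuousLinearMap.proj_apply, smul_eq_mul]
  set h : (Fin d → ℝ) → ℝ := fun q => θ q + ℓ q with hh
  have hhd : ∀ q, HasFDerivAt h (((fderiv ℝ φ ((q : Fin d → ℝ), 0, 0)).comp ιq) + ℓ) q :=
    fun q => (hθd q).add ℓ.hasFDerivAt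
  have hh0 : ∀ q, fderiv ℝ h q = 0 := by
    intro q
    rw [(hhd q).fderiv]
    ext v
    simp only [ContinuousLinearMap.add_apply, ContinuousLinearMap.comp_apply,
      ContinuousLinearMap.zero_apply]
    have : ιq v = ((v : Fin d → ℝ), 0, 0) := rfl
    rw [this, hfin, hℓ v]
    have : ∑ i, v i * e i = ∑ i, e i * v i := Finset.sum_congr rfl fun i _ => mul_comm _ _
    linarith [this]
  -- pick a coordinate where e is nonzero
  have hie : ∃ i, e i ≠ 0 := by
    by_contra hcon
    push_neg at hcon
    rw [Finset.sum_eq_zero (fun i _ => by rw [hcon i]; ring)] at he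
    exact zero_ne_one he
  obtain ⟨i0, hi0⟩ := hie
  set δ : Fin d → ℝ := fun i => (((Pi.single i0 1 : Fin d → ℤ) i : ℤ) : ℝ) with hδdef
  have hδ : δ = Pi.single i0 (1:ℝ) := by
    funext i
    simp [hδdef, Pi.single_apply]
  have hcst := is_const_of_fderiv_eq_zero
    (fun q => (hhd q).differentiableAt) hh0 δ 0
  have hθδ : θ δ = θ 0 := by
    have := hφper (Pi.single i0 1) ((0 : Fin d → ℝ), (0 : Fin d → ℝ), (0 : Fin m → Fin d → ℝ))
    simpa [hθ, hδdef] using this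
  have hℓδ : ℓ δ = e i0 := by
    rw [hℓ, hδ]
    simp [Pi.single_apply, mul_ite, Finset.sum_ite_eq]
  have hℓ0 : ℓ 0 = 0 := map_zero ℓ
  rw [hh] at hcst
  simp only at hcst
  rw [hθδ, hℓδ, hℓ0, add_zero] at hcst
  exact hi0 (by linarith [hcst])

end Analytic

/-- (Positivity of the effective diffusion coefficient.) Assume
`V ∈ C^∞(𝕋^d)`, let `e` be a unit vector and let `φ` (smooth, with all derivatives in
`L²(μ_β)`) solve `𝓛φ = p·e`. Then `D^e = β⁻¹ Σ_j α_j ∫ |∇_{z_j}φ|² dμ_β > 0`; in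
particular it is impossible that `∇_{z_j}φ = 0` `μ_β`-a.e. for every `j`. -/
theorem diffusion_positive
    (d m : ℕ) (hd : 1 ≤ d) (hm : 1 ≤ m)
    (β : ℝ) (hβ : 0 < β)
    (α lam : Fin m → ℝ) (hα : ∀ j, 0 < α j) (hlam : ∀ j, 0 < lam j)
    (V : (Fin d → ℝ) → ℝ) (hV : ContDiff ℝ (⊤ : ℕ∞) V) (hVper : PerV d V)
    (Z : ℝ) (hZ : 0 < Z)
    (hprob : IsProbabilityMeasure (gibbs d m β Z V))
    (e : Fin d → ℝ) (he : ∑ i, (e i) ^ 2 = 1)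
    (φ : Xsp d m → ℝ) (hφ : ContDiff ℝ (⊤ : ℕ∞) φ) (hφper : PerQ d m φ)
    (hφL2 : ∀ (n : ℕ) (v : Fin n → Xsp d m),
      Integrable (fun x => (iteratedFDeriv ℝ n φ x v) ^ 2) (gibbs d m β Z V))
    (hpoisson : ∀ x, gen d m β α lam V φ x = ∑ i, x.2.1 i * e i) :
    0 < β⁻¹ * ∑ j, α j * ∫ x, ∑ k, (pZ d m j k φ x) ^ 2 ∂(gibbs d m β Z V) ∧
    ¬ (∀ j : Fin m, ∀ᵐ x ∂(gibbs d m β Z V), ∀ k : Fin d, pZ d m j k φ x = 0) := by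
  have key : ¬ (∀ j : Fin m, ∀ᵐ x ∂(gibbs d m β Z V), ∀ k : Fin d, pZ d m j k φ x = 0) := by
    intro hae
    exact analytic_contradiction d m hm β α lam hlam V e he φ hφ hφper
      (ae_to_everywhere d m β Z hZ V hV φ hφ hφper hae) hpoisson
  refine ⟨?_, key⟩
  push_neg at key
  obtain ⟨j0, hj0⟩ := key
  have hInt : ∀ j : Fin m,
      Integrable (fun x => ∑ k, (pZ d m j k φ x) ^ 2) (gibbs d m β Z V) := by
    intro j
    apply integrable_finset_sum
    intro k _
    have h := hφL2 1 (fun _ => zdir d m j (Pi.single k 1))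
    have heq2 : (fun x => (iteratedFDeriv ℝ 1 φ x (fun _ => zdir d m j (Pi.single k 1))) ^ 2)
        = fun x => (pZ d m j k φ x) ^ 2 := by
      funext x
      rw [iteratedFDeriv_one_apply]
      rfl
    rwa [heq2] at h
  have hnn : ∀ j : Fin m, 0 ≤ ∫ x, ∑ k, (pZ d m j k φ x) ^ 2 ∂(gibbs d m β Z V) :=
    fun j => integral_nonneg fun x => Finset.sum_nonneg fun k _ => sq_nonneg _
  have hpos : 0 < ∫ x, ∑ k, (pZ d m j0 k φ x) ^ 2 ∂(gibbs d m β Z V) := by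
    rcases (hnn j0).lt_or_eq with h | h
    · exact h
    · exfalso
      apply hj0
      have h0 := (integral_eq_zero_iff_of_nonneg
        (fun x => Finset.sum_nonneg fun k _ => sq_nonneg (pZ d m j0 k φ x)) (hInt j0)).1 h.symm
      filter_upwards [h0] with x hx k
      have hx' : ∑ k, (pZ d m j0 k φ x) ^ 2 = 0 := hx
      obtain ⟨k, hk⟩ := k
      have := (Finset.sum_eq_zero_iff_of_nonneg (fun k _ => sq_nonneg _)).1 hx' k
        (Finset.mem_univ k)
      exact hk ((pow_eq_zero_iff (two_ne_zero)).1 this)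
  have hsum : 0 < ∑ j, α j * ∫ x, ∑ k, (pZ d m j k φ x) ^ 2 ∂(gibbs d m β Z V) :=
    Finset.sum_pos' (fun j _ => mul_nonneg (hα j).le (hnn j))
      ⟨j0, Finset.mem_univ j0, mul_pos (hα j0) hpos⟩
  exact mul_pos (inv_pos.2 hβ) hsum
end
end

section
/- (Lyapunov condition, periodic potential.) Let V ∈ C¹(ℝ^d) be ℤ^d-periodic (so V and ∇V are bounded). Define G(q,p,r) = Ĉ + (13/32)|p|² + (5/16)|r|² + (13/16)V(q) + (3/16)⟨p,r⟩ on ℝ^{3d}. Then there exist constants Ĉ > 0 and d̂ > 0, depending only on d, sup|V| and sup|∇V|, such that G(x) ≥ 1 for all x ∈ ℝ^{3d}, G(q,p,r) → +∞ as |p|² + |r|² → ∞, and LG(x) ≤ −(1/4) G(x) + d̂ for all x ∈ ℝ^{3d}. -/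
open MeasureTheory Real Filter

noncomputable section

/-- The phase space `ℝ^{3d}` with coordinates `(q, p, r)`. -/
abbrev Y3 (d : ℕ) := (Fin d → ℝ) × (Fin d → ℝ) × (Fin d → ℝ)

/-- The generator of the generalized Langevin dynamics (all constants set to `1`):
`LG = p·∇_qG − ∇V(q)·∇_pG + r·∇_pG − p·∇_rG − r·∇_rG + Δ_rG`. -/
def Lgle (d : ℕ) (V : (Fin d → ℝ) → ℝ) (G : Y3 d → ℝ) (x : Y3 d) : ℝ :=
  fderiv ℝ G x (x.2.1, 0, 0)
  - fderiv ℝ G x (0, (fun i => fderiv ℝ V x.1 (Pi.single i 1)), 0)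
  + fderiv ℝ G x (0, x.2.2, 0)
  - fderiv ℝ G x (0, 0, x.2.1)
  - fderiv ℝ G x (0, 0, x.2.2)
  + ∑ i, fderiv ℝ (fun y => fderiv ℝ G y (0, 0, Pi.single i 1)) x (0, 0, Pi.single i 1)

/-!
For `G = C + a|p|² + b|r|² + c V(q) + e⟨p, r⟩` the generator gives
`LG = (c - 2a)⟨p, ∇V⟩ - e⟨r, ∇V⟩ + (2a - 2b - e)⟨p, r⟩ + (e - 2b)|r|² - e|p|² + 2bd`.
The coefficients `13/32, 5/16, 13/16, 3/16` are chosen so that the `⟨p, ∇V⟩` and `⟨p, r⟩` terms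
cancel, leaving `LG = -(3/16)⟨r, ∇V⟩ - (3/16)|p|² - (7/16)|r|² + (5/8)d`. Periodicity bounds `V`
and `∇V` by their maxima on `[0, 1]^d`, and then `2|⟨u, v⟩| ≤ |u|² + |v|²` gives both
`G ≥ C - (13/16) sup|V| + (7/32)(|p|² + |r|²)` and `LG ≤ -G/4 + d̂`.
-/

section DotProduct

variable {ι : Type*} [Fintype ι]

lemma dotProduct_self_nonneg (v : ι → ℝ) : 0 ≤ v ⬝ᵥ v :=
  Finset.sum_nonneg fun i _ => mul_self_nonneg (v i)

lemma sum_sq_eq_dotProduct_self (v : ι → ℝ) : ∑ i, v i ^ 2 = v ⬝ᵥ v := by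
  simp only [dotProduct, sq]

lemma two_mul_abs_dotProduct_le (u v : ι → ℝ) : 2 * |u ⬝ᵥ v| ≤ u ⬝ᵥ u + v ⬝ᵥ v := by
  have hsub := dotProduct_self_nonneg (u - v)
  have hadd := dotProduct_self_nonneg (u + v)
  simp only [sub_dotProduct, dotProduct_sub, add_dotProduct, dotProduct_add,
    dotProduct_comm v u] at hsub hadd
  cases abs_cases (u ⬝ᵥ v) <;> linarith

lemma ContinuousLinearMap.apply_eq_dotProduct [DecidableEq ι] (f : (ι → ℝ) →L[ℝ] ℝ) (v : ι → ℝ) :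
    f v = v ⬝ᵥ fun i => f (Pi.single i 1) := by
  conv_lhs => rw [pi_eq_sum_univ' v]
  simp [dotProduct]

def dotProductCLM (u : ι → ℝ) : (ι → ℝ) →L[ℝ] ℝ :=
  ∑ i, u i • ContinuousLinearMap.proj i

@[simp] lemma dotProductCLM_apply (u v : ι → ℝ) : dotProductCLM u v = u ⬝ᵥ v := by
  simp [dotProductCLM, dotProduct]

variable {E : Type*} [NormedAddCommGroup E] [NormedSpace ℝ E]

theorem HasFDerivAt.dotProduct {f g : E → ι → ℝ} {f' g' : E →L[ℝ] ι → ℝ} {x : E}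
    (hf : HasFDerivAt f f' x) (hg : HasFDerivAt g g' x) :
    HasFDerivAt (fun y => f y ⬝ᵥ g y)
      ((dotProductCLM (f x)).comp g' + (dotProductCLM (g x)).comp f') x := by
  refine (HasFDerivAt.fun_sum fun i _ =>
    (hasFDerivAt_pi'.1 hf i).mul (hasFDerivAt_pi'.1 hg i)).congr_fderiv ?_
  ext v
  simp only [Finset.sum_add_distrib, add_apply, sum_apply, smul_apply,
    ContinuousLinearMap.comp_apply, ContinuousLinearMap.proj_apply, smul_eq_mul, dotProductCLM_apply]
  rfl

end DotProduct

section Periodic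

variable {ι : Type*}

lemma exists_forall_norm_le_of_periodic {E : Type*} [SeminormedAddCommGroup E]
    {f : (ι → ℝ) → E} (hf : Continuous f)
    (hper : ∀ (k : ι → ℤ) (q : ι → ℝ), f (q + fun i => (k i : ℝ)) = f q) :
    ∃ M, ∀ q, ‖f q‖ ≤ M := by
  obtain ⟨M, hM⟩ := (isCompact_Icc (a := (0 : ι → ℝ)) (b := 1)).exists_bound_of_continuousOn
    hf.continuousOn
  refine ⟨M, fun q => ?_⟩
  rw [← hper (fun i => -⌊q i⌋) q]
  refine hM _ ⟨fun i => ?_, fun i => ?_⟩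
  · simpa using Int.floor_le (q i)
  · simpa [add_comm] using (Int.lt_floor_add_one (q i)).le

lemma fderiv_periodic [Fintype ι] {F : Type*} [NormedAddCommGroup F] [NormedSpace ℝ F]
    {f : (ι → ℝ) → F}
    (hper : ∀ (k : ι → ℤ) (q : ι → ℝ), f (q + fun i => (k i : ℝ)) = f q)
    (k : ι → ℤ) (q : ι → ℝ) : fderiv ℝ f (q + fun i => (k i : ℝ)) = fderiv ℝ f q := by
  rw [← fderiv_comp_add_right]
  simp only [hper]

end Periodic

section Gradient

variable {ι : Type*} [Fintype ι] [DecidableEq ι] {V : (ι → ℝ) → ℝ}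

def grad (V : (ι → ℝ) → ℝ) (q : ι → ℝ) : ι → ℝ :=
  fun i => fderiv ℝ V q (Pi.single i 1)

lemma continuous_grad (hV : ContDiff ℝ 1 V) : Continuous (grad V) :=
  continuous_pi fun _ => (hV.continuous_fderiv one_ne_zero).clm_apply continuous_const

lemma grad_periodic (hper : ∀ (k : ι → ℤ) (q : ι → ℝ), V (q + fun i => (k i : ℝ)) = V q)
    (k : ι → ℤ) (q : ι → ℝ) : grad V (q + fun i => (k i : ℝ)) = grad V q := by
  unfold grad
  rw [fderiv_periodic hper]

end Gradient

section Lyapunov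

def quadLyap {d : ℕ} (V : (Fin d → ℝ) → ℝ) (C a b c e : ℝ) (x : Y3 d) : ℝ :=
  C + a * (x.2.1 ⬝ᵥ x.2.1) + b * (x.2.2 ⬝ᵥ x.2.2) + c * V x.1 + e * (x.2.1 ⬝ᵥ x.2.2)

variable {d : ℕ} {V : (Fin d → ℝ) → ℝ} {C a b c e : ℝ}

lemma fderiv_quadLyap_apply {x : Y3 d} (hV : DifferentiableAt ℝ V x.1) (v : Y3 d) :
    fderiv ℝ (quadLyap V C a b c e) x v
      = 2 * a * (x.2.1 ⬝ᵥ v.2.1) + 2 * b * (x.2.2 ⬝ᵥ v.2.2) + c * fderiv ℝ V x.1 v.1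
        + e * (x.2.1 ⬝ᵥ v.2.2 + x.2.2 ⬝ᵥ v.2.1) := by
  have hp := (hasFDerivAt_snd (𝕜 := ℝ) (p := x)).fst
  have hr := (hasFDerivAt_snd (𝕜 := ℝ) (p := x)).snd
  have hq := hV.hasFDerivAt.comp x hasFDerivAt_fst
  have h : HasFDerivAt (quadLyap V C a b c e) _ x :=
    (((((hp.dotProduct hp).const_mul a).const_add C).add ((hr.dotProduct hr).const_mul b)).add
      (hq.const_mul c)).add ((hp.dotProduct hr).const_mul e)
  rw [h.fderiv]
  simp only [smul_add, add_apply, smul_apply, ContinuousLinearMap.comp_apply,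
    ContinuousLinearMap.coe_snd', ContinuousLinearMap.coe_fst', dotProductCLM_apply, smul_eq_mul]
  ring

lemma fderiv_fderiv_quadLyap_apply_zero_zero (hV : Differentiable ℝ V) (x : Y3 d) (w : Fin d → ℝ) :
    fderiv ℝ (fun y => fderiv ℝ (quadLyap V C a b c e) y (0, 0, w)) x (0, 0, w)
      = 2 * b * (w ⬝ᵥ w) := by
  have hfun : (fun y => fderiv ℝ (quadLyap V C a b c e) y (0, 0, w))
      = fun y => 2 * b * (y.2.2 ⬝ᵥ w) + e * (y.2.1 ⬝ᵥ w) := by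
    funext y
    simp [fderiv_quadLyap_apply (hV _)]
  have h := ((hasFDerivAt_snd.snd.dotProduct (hasFDerivAt_const w x)).const_mul (2 * b)).fun_add
    ((hasFDerivAt_snd.fst.dotProduct (hasFDerivAt_const w x)).const_mul e)
  rw [hfun, h.fderiv]
  simp

lemma Lgle_quadLyap (hV : Differentiable ℝ V) (x : Y3 d) :
    Lgle d V (quadLyap V C a b c e) x
      = (c - 2 * a) * (x.2.1 ⬝ᵥ grad V x.1) - e * (x.2.2 ⬝ᵥ grad V x.1)
        + (2 * a - 2 * b - e) * (x.2.1 ⬝ᵥ x.2.2) + (e - 2 * b) * (x.2.2 ⬝ᵥ x.2.2)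
        - e * (x.2.1 ⬝ᵥ x.2.1) + 2 * b * d := by
  unfold Lgle grad
  simp only [fderiv_fderiv_quadLyap_apply_zero_zero hV]
  simp only [fderiv_quadLyap_apply (hV _)]
  rw [(fderiv ℝ V x.1).apply_eq_dotProduct x.2.1]
  simp only [dotProduct_zero, mul_zero, add_zero, zero_add, map_zero, dotProduct_comm x.2.2 x.2.1,
    dotProduct_single, Pi.single_eq_same, mul_one, Finset.sum_const, Finset.card_univ,
    Fintype.card_fin, nsmul_eq_mul]
  ring

end Lyapunov

section Bounds

variable {d : ℕ} {V : (Fin d → ℝ) → ℝ} {C M K : ℝ}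

lemma quadLyap_lower_bound (hVM : ∀ q, |V q| ≤ M) (x : Y3 d) :
    C - 13 / 16 * M + 7 / 32 * (x.2.1 ⬝ᵥ x.2.1 + x.2.2 ⬝ᵥ x.2.2)
      ≤ quadLyap V C (13 / 32) (5 / 16) (13 / 16) (3 / 16) x := by
  have hpr := two_mul_abs_dotProduct_le x.2.1 x.2.2
  have hVx := abs_le.1 (hVM x.1)
  unfold quadLyap
  linarith [neg_abs_le (x.2.1 ⬝ᵥ x.2.2), dotProduct_self_nonneg x.2.1]

lemma Lgle_quadLyap_le (hV : Differentiable ℝ V) (hVM : ∀ q, |V q| ≤ M)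
    (hgrad : ∀ q, grad V q ⬝ᵥ grad V q ≤ K) (x : Y3 d) :
    Lgle d V (quadLyap V C (13 / 32) (5 / 16) (13 / 16) (3 / 16)) x
      ≤ -(1 / 4) * quadLyap V C (13 / 32) (5 / 16) (13 / 16) (3 / 16) x
        + (C / 4 + 13 / 64 * M + 5 / 8 * d + 3 / 32 * K) := by
  have hpr := two_mul_abs_dotProduct_le x.2.1 x.2.2
  have hrg := two_mul_abs_dotProduct_le x.2.2 (grad V x.1)
  have hVx := abs_le.1 (hVM x.1)
  rw [Lgle_quadLyap hV]
  unfold quadLyap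
  linarith [le_abs_self (x.2.1 ⬝ᵥ x.2.2), neg_abs_le (x.2.2 ⬝ᵥ grad V x.1), hgrad x.1,
    dotProduct_self_nonneg x.2.1, dotProduct_self_nonneg x.2.2]

end Bounds

theorem lyapunov_periodic_general
    (d : ℕ)
    (V : (Fin d → ℝ) → ℝ) (hV : ContDiff ℝ 1 V)
    (hVper : ∀ (k : Fin d → ℤ) (q : Fin d → ℝ), V (q + fun i => (k i : ℝ)) = V q) :
    ∃ Chat dhat : ℝ, 0 < Chat ∧ 0 < dhat ∧
      (∀ x : Y3 d,
        1 ≤ Chat + 13 / 32 * ∑ i, (x.2.1 i) ^ 2 + 5 / 16 * ∑ i, (x.2.2 i) ^ 2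
            + 13 / 16 * V x.1 + 3 / 16 * ∑ i, x.2.1 i * x.2.2 i) ∧
      (∀ M : ℝ, ∃ R : ℝ, ∀ x : Y3 d,
        R ≤ ∑ i, (x.2.1 i) ^ 2 + ∑ i, (x.2.2 i) ^ 2 →
        M ≤ Chat + 13 / 32 * ∑ i, (x.2.1 i) ^ 2 + 5 / 16 * ∑ i, (x.2.2 i) ^ 2
            + 13 / 16 * V x.1 + 3 / 16 * ∑ i, x.2.1 i * x.2.2 i) ∧
      (∀ x : Y3 d,
        Lgle d V
          (fun y => Chat + 13 / 32 * ∑ i, (y.2.1 i) ^ 2 + 5 / 16 * ∑ i, (y.2.2 i) ^ 2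
            + 13 / 16 * V y.1 + 3 / 16 * ∑ i, y.2.1 i * y.2.2 i) x
        ≤ -(1 / 4) * (Chat + 13 / 32 * ∑ i, (x.2.1 i) ^ 2 + 5 / 16 * ∑ i, (x.2.2 i) ^ 2
            + 13 / 16 * V x.1 + 3 / 16 * ∑ i, x.2.1 i * x.2.2 i) + dhat) := by
  obtain ⟨MV, hMV⟩ := exists_forall_norm_le_of_periodic hV.continuous hVper
  obtain ⟨K, hK⟩ := exists_forall_norm_le_of_periodic
    ((continuous_grad hV).dotProduct (continuous_grad hV)) fun k q => by
      rw [grad_periodic hVper]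
  simp only [Real.norm_eq_abs] at hMV hK
  have hMV0 : 0 ≤ MV := (abs_nonneg _).trans (hMV 0)
  have hK0 : 0 ≤ K := (abs_nonneg _).trans (hK 0)
  have hgrad : ∀ q, grad V q ⬝ᵥ grad V q ≤ K := fun q => (le_abs_self _).trans (hK q)
  simp only [sum_sq_eq_dotProduct_self]
  refine ⟨1 + 13 / 16 * MV, (1 + 13 / 16 * MV) / 4 + 13 / 64 * MV + 5 / 8 * d + 3 / 32 * K,
    by positivity, by positivity, fun x => ?_, fun M => ⟨32 / 7 * M, fun x hx => ?_⟩,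
    Lgle_quadLyap_le (hV.differentiable one_ne_zero) hMV hgrad⟩
  · exact le_trans (by linarith [dotProduct_self_nonneg x.2.1, dotProduct_self_nonneg x.2.2])
      (quadLyap_lower_bound hMV x)
  · exact le_trans (by linarith) (quadLyap_lower_bound hMV x)

/-- (Lyapunov condition, periodic potential.) Let `V ∈ C¹(ℝ^d)` be
`ℤ^d`-periodic. For `G(q,p,r) = Ĉ + (13/32)|p|² + (5/16)|r|² + (13/16)V(q) + (3/16)⟨p,r⟩`
there are `Ĉ, d̂ > 0` such that `G ≥ 1`, `G → ∞` as `|p|² + |r|² → ∞`, and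
`LG ≤ −(1/4)G + d̂` everywhere. -/
theorem lyapunov_periodic
    (d : ℕ) (hd : 1 ≤ d)
    (V : (Fin d → ℝ) → ℝ) (hV : ContDiff ℝ 1 V)
    (hVper : ∀ (k : Fin d → ℤ) (q : Fin d → ℝ), V (q + fun i => (k i : ℝ)) = V q) :
    ∃ Chat dhat : ℝ, 0 < Chat ∧ 0 < dhat ∧
      (∀ x : Y3 d,
        1 ≤ Chat + 13 / 32 * ∑ i, (x.2.1 i) ^ 2 + 5 / 16 * ∑ i, (x.2.2 i) ^ 2
            + 13 / 16 * V x.1 + 3 / 16 * ∑ i, x.2.1 i * x.2.2 i) ∧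
      (∀ M : ℝ, ∃ R : ℝ, ∀ x : Y3 d,
        R ≤ ∑ i, (x.2.1 i) ^ 2 + ∑ i, (x.2.2 i) ^ 2 →
        M ≤ Chat + 13 / 32 * ∑ i, (x.2.1 i) ^ 2 + 5 / 16 * ∑ i, (x.2.2 i) ^ 2
            + 13 / 16 * V x.1 + 3 / 16 * ∑ i, x.2.1 i * x.2.2 i) ∧
      (∀ x : Y3 d,
        Lgle d V
          (fun y => Chat + 13 / 32 * ∑ i, (y.2.1 i) ^ 2 + 5 / 16 * ∑ i, (y.2.2 i) ^ 2
            + 13 / 16 * V y.1 + 3 / 16 * ∑ i, y.2.1 i * y.2.2 i) x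
        ≤ -(1 / 4) * (Chat + 13 / 32 * ∑ i, (x.2.1 i) ^ 2 + 5 / 16 * ∑ i, (x.2.2 i) ^ 2
            + 13 / 16 * V x.1 + 3 / 16 * ∑ i, x.2.1 i * x.2.2 i) + dhat) :=
  lyapunov_periodic_general d V hV hVper
end
end

section
/- (Lyapunov condition for powers.) Let V ∈ C¹(ℝ^d) be ℤ^d-periodic (so V and ∇V are bounded), and let G(q,p,r) = Ĉ + (13/32)|p|² + (5/16)|r|² + (13/16)V(q) + (3/16)⟨p,r⟩ with Ĉ > 0 chosen so large that G ≥ 1 everywhere and LG ≤ −(1/4)G + d̂ for some d̂ > 0. Then for every integer l ≥ 1 there exist constants a_l, d_l > 0 such that L(G^l)(x) ≤ −a_l G(x)^l + d_l for all x ∈ ℝ^{3d}. -/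
/-!
`L` acts on `r` as a diffusion, so the chain rule gives
`L(G^l) = l G^{l-1} LG + l(l-1) G^{l-2} |∇_r G|²`. The first term is at most
`-(l/4) G^l + l d̂ G^{l-1}`. Since `∇_r G = (5/8) r + (3/16) p`, the quadratic part of `G` is positive
definite and `V` is bounded below (continuous and periodic), `|∇_r G|² ≤ c G`. Hence
`L(G^l) ≤ -(l/4) G^l + K G^{l-1}`, and `K G^{l-1} ≤ (l/8) G^l + C` for `G ≥ 1`.
-/

open MeasureTheory Real Filter

noncomputable section

theorem Lgle_comp {d : ℕ} (V : (Fin d → ℝ) → ℝ) {G : Y3 d → ℝ} {φ φ' φ'' : ℝ → ℝ} (x : Y3 d)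
    (hφ : ∀ t, HasDerivAt φ (φ' t) t) (hφ' : HasDerivAt φ' (φ'' (G x)) (G x))
    (hG : Differentiable ℝ G)
    (hGr : ∀ i, DifferentiableAt ℝ (fun y => fderiv ℝ G y (0, 0, Pi.single i 1)) x) :
    Lgle d V (fun y => φ (G y)) x = φ' (G x) * Lgle d V G x
      + φ'' (G x) * ∑ i, fderiv ℝ G x (0, 0, Pi.single i 1) ^ 2 := by
  have hcomp (y v : Y3 d) : fderiv ℝ (fun y => φ (G y)) y v = φ' (G y) * fderiv ℝ G y v := by
    have h : HasFDerivAt (fun y => φ (G y)) (φ' (G y) • fderiv ℝ G y) y :=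
      (hφ (G y)).comp_hasFDerivAt y (hG y).hasFDerivAt
    rw [h.fderiv, smul_apply, smul_eq_mul]
  have hsecond (i : Fin d) :
      fderiv ℝ (fun y => fderiv ℝ (fun y => φ (G y)) y (0, 0, Pi.single i 1)) x (0, 0, Pi.single i 1)
        = φ'' (G x) * fderiv ℝ G x (0, 0, Pi.single i 1) ^ 2
          + φ' (G x) * fderiv ℝ (fun y => fderiv ℝ G y (0, 0, Pi.single i 1)) x
              (0, 0, Pi.single i 1) := by
    have h : HasFDerivAt (fun y => φ' (G y)) (φ'' (G x) • fderiv ℝ G x) x :=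
      hφ'.comp_hasFDerivAt x (hG x).hasFDerivAt
    simp only [hcomp]
    rw [(h.fun_mul (hGr i).hasFDerivAt).fderiv]
    simp only [add_apply, smul_apply, smul_eq_mul]
    ring
  simp only [Lgle, hsecond]
  simp only [hcomp, Finset.sum_add_distrib, ← Finset.mul_sum]
  ring

theorem Lgle_pow_succ {d : ℕ} (V : (Fin d → ℝ) → ℝ) {G : Y3 d → ℝ} (n : ℕ) (x : Y3 d)
    (hG : Differentiable ℝ G)
    (hGr : ∀ i, DifferentiableAt ℝ (fun y => fderiv ℝ G y (0, 0, Pi.single i 1)) x) :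
    Lgle d V (fun y => G y ^ (n + 1)) x = (n + 1) * G x ^ n * Lgle d V G x
      + (n + 1) * (n * G x ^ (n - 1)) * ∑ i, fderiv ℝ G x (0, 0, Pi.single i 1) ^ 2 :=
  Lgle_comp (φ := fun t => t ^ (n + 1)) (φ' := fun t => (n + 1) * t ^ n)
    (φ'' := fun t => (n + 1) * (n * t ^ (n - 1))) V x
    (fun t => by simpa using hasDerivAt_pow (n + 1) t)
    ((hasDerivAt_pow n (G x)).const_mul _) hG hGr

theorem range_eq_image_Icc_of_periodic {d : ℕ} {V : (Fin d → ℝ) → ℝ}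
    (hper : ∀ (k : Fin d → ℤ) (q : Fin d → ℝ), V (q + fun i => (k i : ℝ)) = V q) :
    Set.range V = V '' Set.Icc 0 1 := by
  refine subset_antisymm ?_ (Set.image_subset_range _ _)
  rintro _ ⟨q, rfl⟩
  refine ⟨fun i => Int.fract (q i), ⟨fun i => Int.fract_nonneg _, fun i => (Int.fract_lt_one _).le⟩, ?_⟩
  rw [← hper (fun i => ⌊q i⌋)]
  congr 1
  exact funext fun i => Int.fract_add_floor (q i)

theorem bddBelow_range_of_periodic {d : ℕ} {V : (Fin d → ℝ) → ℝ} (hV : Continuous V)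
    (hper : ∀ (k : Fin d → ℤ) (q : Fin d → ℝ), V (q + fun i => (k i : ℝ)) = V q) :
    BddBelow (Set.range V) := by
  rw [range_eq_image_Icc_of_periodic hper]
  exact isCompact_Icc.bddBelow_image hV.continuousOn

theorem sum_sq_le_eight_mul_quadratic_part {d : ℕ} (p r : Fin d → ℝ) :
    ∑ i, (5 / 8 * r i + 3 / 16 * p i) ^ 2
      ≤ 8 * (13 / 32 * ∑ i, p i ^ 2 + 5 / 16 * ∑ i, r i ^ 2 + 3 / 16 * ∑ i, p i * r i) := by
  simp only [Finset.mul_sum, ← Finset.sum_add_distrib]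
  exact Finset.sum_le_sum fun i _ => by nlinarith [sq_nonneg (p i + r i), sq_nonneg (p i - r i)]

def gleLyapunov (d : ℕ) (V : (Fin d → ℝ) → ℝ) (C : ℝ) (y : Y3 d) : ℝ :=
  C + 13 / 32 * ∑ i, (y.2.1 i) ^ 2 + 5 / 16 * ∑ i, (y.2.2 i) ^ 2
    + 13 / 16 * V y.1 + 3 / 16 * ∑ i, y.2.1 i * y.2.2 i

section gleLyapunov

variable {d : ℕ} {V : (Fin d → ℝ) → ℝ} (C : ℝ)

theorem differentiable_gleLyapunov (hV : Differentiable ℝ V) :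
    Differentiable ℝ (gleLyapunov d V C) := by
  unfold gleLyapunov
  fun_prop

theorem fderiv_gleLyapunov_apply_r (hV : Differentiable ℝ V) (y : Y3 d) (i : Fin d) :
    fderiv ℝ (gleLyapunov d V C) y (0, 0, Pi.single i 1) = 5 / 8 * y.2.2 i + 3 / 16 * y.2.1 i := by
  unfold gleLyapunov
  simp (disch := fun_prop) [fderiv_fun_add, fderiv_fun_sum, fderiv_const_mul, fderiv_fun_mul,
    fderiv_fun_pow, fderiv_const_add, fderiv_apply, fderiv.fst, fderiv.snd, fderiv_fun_comp,
    Pi.single_apply]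
  ring

theorem Lgle_gleLyapunov_pow_succ (hV : Differentiable ℝ V) (n : ℕ) (x : Y3 d) :
    Lgle d V (fun y => gleLyapunov d V C y ^ (n + 1)) x
      = (n + 1) * gleLyapunov d V C x ^ n * Lgle d V (gleLyapunov d V C) x
        + (n + 1) * (n * gleLyapunov d V C x ^ (n - 1))
          * ∑ i, (5 / 8 * x.2.2 i + 3 / 16 * x.2.1 i) ^ 2 := by
  have hr (i : Fin d) : (fun y => fderiv ℝ (gleLyapunov d V C) y (0, 0, Pi.single i 1))
      = fun y => 5 / 8 * y.2.2 i + 3 / 16 * y.2.1 i :=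
    funext fun y => fderiv_gleLyapunov_apply_r C hV y i
  rw [Lgle_pow_succ V n x (differentiable_gleLyapunov C hV) fun i => by rw [hr]; fun_prop]
  simp only [fderiv_gleLyapunov_apply_r C hV]

theorem sum_sq_le_mul_gleLyapunov {m : ℝ} (hm : ∀ q, m ≤ V q) {y : Y3 d}
    (hy : 1 ≤ gleLyapunov d V C y) :
    ∑ i, (5 / 8 * y.2.2 i + 3 / 16 * y.2.1 i) ^ 2
      ≤ 8 * (1 + |C + 13 / 16 * m|) * gleLyapunov d V C y := by
  have hQ := sum_sq_le_eight_mul_quadratic_part y.2.1 y.2.2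
  calc ∑ i, (5 / 8 * y.2.2 i + 3 / 16 * y.2.1 i) ^ 2
      ≤ 8 * (gleLyapunov d V C y - C - 13 / 16 * V y.1) := by unfold gleLyapunov; linarith
    _ ≤ 8 * (gleLyapunov d V C y + |C + 13 / 16 * m|) := by
        linarith [neg_abs_le (C + 13 / 16 * m), hm y.1]
    _ ≤ 8 * (1 + |C + 13 / 16 * m|) * gleLyapunov d V C y := by
        nlinarith [abs_nonneg (C + 13 / 16 * m)]

end gleLyapunov

theorem exists_mul_pow_le {a : ℝ} (ha : 0 < a) (K : ℝ) (n : ℕ) :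
    ∃ C > 0, ∀ t ≥ 0, K * t ^ n ≤ a * t ^ (n + 1) + C := by
  set B := max 1 (K / a)
  refine ⟨|K| * B ^ n + 1, by positivity, fun t ht => ?_⟩
  rcases le_or_gt t B with htB | hBt
  · have : K * t ^ n ≤ |K| * B ^ n :=
      calc K * t ^ n ≤ |K| * t ^ n := by gcongr; exact le_abs_self K
        _ ≤ |K| * B ^ n := by gcongr
    nlinarith [pow_nonneg ht (n + 1)]
  · have hK : K ≤ a * t := (div_le_iff₀' ha).1 ((le_max_right _ _).trans hBt.le)
    calc K * t ^ n ≤ a * t * t ^ n := by gcongr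
      _ = a * t ^ (n + 1) := by ring
      _ ≤ _ := by linarith [show 0 ≤ |K| * B ^ n by positivity]

theorem lyapunov_drift_pow_le {g Lg S c dhat : ℝ} (n : ℕ) (hg : 0 ≤ g)
    (hLg : Lg ≤ -(1 / 4) * g + dhat) (hS : S ≤ c * g) :
    (n + 1) * g ^ n * Lg + (n + 1) * (n * g ^ (n - 1)) * S
      ≤ -((n + 1) / 4) * g ^ (n + 1) + (n + 1) * (dhat + n * c) * g ^ n := by
  have hfirst : g ^ n * Lg ≤ g ^ n * (-(1 / 4) * g + dhat) :=
    mul_le_mul_of_nonneg_left hLg (by positivity)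
  have hsecond : n * g ^ (n - 1) * S ≤ n * c * g ^ n := by
    rcases n with _ | n
    · simp
    · calc ((n + 1 : ℕ) : ℝ) * g ^ n * S ≤ (n + 1 : ℕ) * g ^ n * (c * g) := by gcongr
        _ = _ := by ring
  calc (n + 1) * g ^ n * Lg + (n + 1) * (n * g ^ (n - 1)) * S
      = (n + 1) * (g ^ n * Lg + n * g ^ (n - 1) * S) := by ring
    _ ≤ (n + 1) * (g ^ n * (-(1 / 4) * g + dhat) + n * c * g ^ n) := by gcongr
    _ = -((n + 1) / 4) * g ^ (n + 1) + (n + 1) * (dhat + n * c) * g ^ n := by ring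

theorem lyapunov_powers_general
    (d : ℕ)
    (V : (Fin d → ℝ) → ℝ) (hV : ContDiff ℝ 1 V)
    (hVper : ∀ (k : Fin d → ℤ) (q : Fin d → ℝ), V (q + fun i => (k i : ℝ)) = V q)
    (Chat : ℝ)
    (G : Y3 d → ℝ)
    (hG : G = fun y => Chat + 13 / 32 * ∑ i, (y.2.1 i) ^ 2 + 5 / 16 * ∑ i, (y.2.2 i) ^ 2
      + 13 / 16 * V y.1 + 3 / 16 * ∑ i, y.2.1 i * y.2.2 i)
    (hG1 : ∀ x, 1 ≤ G x)
    (dhat : ℝ)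
    (hLya : ∀ x, Lgle d V G x ≤ -(1 / 4) * G x + dhat) :
    ∀ l : ℕ, 1 ≤ l → ∃ al dl : ℝ, 0 < al ∧ 0 < dl ∧
      ∀ x, Lgle d V (fun y => (G y) ^ l) x ≤ -al * (G x) ^ l + dl := by
  obtain rfl : G = gleLyapunov d V Chat := hG
  obtain ⟨m, hm⟩ := bddBelow_range_of_periodic hV.continuous hVper
  set c := 8 * (1 + |Chat + 13 / 16 * m|)
  rintro l hl
  obtain ⟨n, rfl⟩ : ∃ n, l = n + 1 := ⟨l - 1, by omega⟩
  obtain ⟨C, hC, hCbound⟩ :=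
    exists_mul_pow_le (a := (n + 1) / 8) (by positivity) ((n + 1) * (dhat + n * c)) n
  refine ⟨(n + 1) / 8, C, by positivity, hC, fun x => ?_⟩
  have hx := hG1 x
  calc Lgle d V (fun y => gleLyapunov d V Chat y ^ (n + 1)) x
      = (n + 1) * gleLyapunov d V Chat x ^ n * Lgle d V (gleLyapunov d V Chat) x
        + (n + 1) * (n * gleLyapunov d V Chat x ^ (n - 1))
          * ∑ i, (5 / 8 * x.2.2 i + 3 / 16 * x.2.1 i) ^ 2 :=
        Lgle_gleLyapunov_pow_succ Chat (hV.differentiable one_ne_zero) n x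
    _ ≤ -((n + 1) / 4) * gleLyapunov d V Chat x ^ (n + 1)
        + (n + 1) * (dhat + n * c) * gleLyapunov d V Chat x ^ n :=
        lyapunov_drift_pow_le n (by linarith) (hLya x)
          (sum_sq_le_mul_gleLyapunov Chat (fun q => hm ⟨q, rfl⟩) hx)
    _ ≤ -((n + 1) / 8) * gleLyapunov d V Chat x ^ (n + 1) + C := by
        linarith [hCbound _ (by linarith)]

/-- (Lyapunov condition for powers.) Let `V ∈ C¹(ℝ^d)` be
`ℤ^d`-periodic and let `G = Ĉ + (13/32)|p|² + (5/16)|r|² + (13/16)V(q) + (3/16)⟨p,r⟩`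
with `Ĉ > 0` such that `G ≥ 1` and `LG ≤ −(1/4)G + d̂` for some `d̂ > 0`. Then for every
`l ≥ 1` there are `a_l, d_l > 0` with `L(G^l) ≤ −a_l G^l + d_l` everywhere. -/
theorem lyapunov_powers
    (d : ℕ) (hd : 1 ≤ d)
    (V : (Fin d → ℝ) → ℝ) (hV : ContDiff ℝ 1 V)
    (hVper : ∀ (k : Fin d → ℤ) (q : Fin d → ℝ), V (q + fun i => (k i : ℝ)) = V q)
    (Chat : ℝ) (hChat : 0 < Chat)
    (G : Y3 d → ℝ)
    (hG : G = fun y => Chat + 13 / 32 * ∑ i, (y.2.1 i) ^ 2 + 5 / 16 * ∑ i, (y.2.2 i) ^ 2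
      + 13 / 16 * V y.1 + 3 / 16 * ∑ i, y.2.1 i * y.2.2 i)
    (hG1 : ∀ x, 1 ≤ G x)
    (dhat : ℝ) (hdhat : 0 < dhat)
    (hLya : ∀ x, Lgle d V G x ≤ -(1 / 4) * G x + dhat) :
    ∀ l : ℕ, 1 ≤ l → ∃ al dl : ℝ, 0 < al ∧ 0 < dl ∧
      ∀ x, Lgle d V (fun y => (G y) ^ l) x ≤ -al * (G x) ^ l + dl :=
  lyapunov_powers_general d V hV hVper Chat G hG hG1 dhat hLya
end
end
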